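/- arXiv:2201.05325 — 6 statements merged into one kernel-verified Lean document; each statement's English description precedes it below -/
import Mathlib

section
/- Let λ = (λ₁,…,λ_m) and μ = (μ₁,…,μ_l) be partitions of n with μ ⊴ λ in dominance order, μ ≠ λ, and μ₁ = λ₁. Suppose k := min{λ_{i-1} − λ_i : i = 2,…,m} > 0 and suppose j ≥ 2 satisfies μ_{j-1} − μ_j < k. Then j ≥ 3, and there exists an index l with 1 < l < j such that μ_{l-1} > μ_l = μ_{l+1} = ⋯ = μ_{j-1}, and for every s with l ≤ s ≤ j−1 one has μ₁ + ⋯ + μ_s < λ₁ + ⋯ + λ_s. -/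
/-!
If the partial sums of `μ` and `λ` agreed at some `s` with `μ_s - μ_{s+1} < k`, dominance at
`s - 1` and `s + 1` would force `λ_s ≤ μ_s` and `μ_{s+1} ≤ λ_{s+1}`, hence `λ_s - λ_{s+1} < k`,
contradicting the choice of `k` (or, past the last part of `λ`, the positivity of `μ_{s+1}`).
At `s = 1`, where `μ₁ = λ₁`, this gives `j ≥ 3`, and `μ_{j-1} < μ₁` since otherwise
`μ₁ - μ₂ = 0 ≤ μ_{j-1} - μ_j < k`. Hence `μ_{j-1}` ends a
constant block `μ_l = ⋯ = μ_{j-1}` with `1 < l`, and every gap inside that block is at most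
`μ_{j-1} - μ_j < k`, so dominance is strict along it.
-/

open Finset

section PartialSums

variable {M : Type*} [AddCommMonoid M] [PartialOrder M] [IsOrderedCancelAddMonoid M]
  {f g : ℕ → M} {s : ℕ}

theorem le_of_sum_Icc_le_of_sum_Icc_succ_eq (hle : ∑ i ∈ Icc 1 s, f i ≤ ∑ i ∈ Icc 1 s, g i)
    (heq : ∑ i ∈ Icc 1 (s + 1), f i = ∑ i ∈ Icc 1 (s + 1), g i) : g (s + 1) ≤ f (s + 1) := by
  rw [sum_Icc_succ_top (by omega), sum_Icc_succ_top (by omega)] at heq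
  exact le_of_add_le_add_left (heq ▸ add_le_add_left hle _)

theorem le_of_sum_Icc_eq_of_sum_Icc_succ_le (heq : ∑ i ∈ Icc 1 s, f i = ∑ i ∈ Icc 1 s, g i)
    (hle : ∑ i ∈ Icc 1 (s + 1), f i ≤ ∑ i ∈ Icc 1 (s + 1), g i) : f (s + 1) ≤ g (s + 1) := by
  rwa [sum_Icc_succ_top (by omega), sum_Icc_succ_top (by omega), heq,
    add_le_add_iff_left] at hle

end PartialSums

theorem sum_Icc_lt_of_sub_lt {m k s : ℕ} {lam mu : ℕ → ℕ}
    (hlam_gap : ∀ i, 2 ≤ i → i ≤ m → k ≤ lam (i - 1) - lam i)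
    (hlam_zero : ∀ i, m < i → lam i = 0)
    (hdom : ∀ s, ∑ i ∈ Icc 1 s, mu i ≤ ∑ i ∈ Icc 1 s, lam i)
    (hs : 1 ≤ s) (hpos : 0 < mu (s + 1)) (hgap : mu s - mu (s + 1) < k) :
    ∑ i ∈ Icc 1 s, mu i < ∑ i ∈ Icc 1 s, lam i := by
  obtain ⟨t, rfl⟩ : ∃ t, s = t + 1 := ⟨s - 1, by omega⟩
  refine (hdom _).lt_of_ne fun heq => ?_
  have hlam_le : lam (t + 1) ≤ mu (t + 1) := le_of_sum_Icc_le_of_sum_Icc_succ_eq (hdom t) heq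
  have hmu_le : mu (t + 1 + 1) ≤ lam (t + 1 + 1) :=
    le_of_sum_Icc_eq_of_sum_Icc_succ_le heq (hdom _)
  by_cases htm : t + 1 + 1 ≤ m
  · have := hlam_gap (t + 1 + 1) (by omega) htm
    simp only [Nat.add_sub_cancel] at this
    omega
  · have := hlam_zero (t + 1 + 1) (by omega)
    omega

theorem exists_start_of_constant_block {α : Type*} [PartialOrder α] {mu : ℕ → α}
    (hmu : AntitoneOn mu (Set.Ici 1)) {a b : ℕ} (ha : 1 ≤ a) (hab : a < b)
    (hlt : mu b < mu a) :
    ∃ l, a < l ∧ l ≤ b ∧ mu l < mu (l - 1) ∧ ∀ s, l ≤ s → s ≤ b → mu s = mu b := by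
  classical
  have hex : ∃ l, a < l ∧ mu l = mu b := ⟨b, hab, rfl⟩
  obtain ⟨hal, hl⟩ := Nat.find_spec hex
  have hlb : Nat.find hex ≤ b := Nat.find_le ⟨hab, rfl⟩
  set l := Nat.find hex
  have mem : ∀ {i}, a ≤ i → i ∈ Set.Ici 1 := fun hi => Set.mem_Ici.2 (ha.trans hi)
  refine ⟨l, hal, hlb, ?_, fun s hls hsb => ?_⟩
  · refine (hmu (mem (by omega)) (mem hal.le) (by omega)).lt_of_ne fun h => ?_
    obtain hprev | hprev : a = l - 1 ∨ a < l - 1 := by omega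
    · exact hlt.ne (hl.symm.trans (h.trans (congrArg mu hprev.symm)))
    · exact Nat.find_min hex (by omega) ⟨hprev, h.symm.trans hl⟩
  · exact le_antisymm (hl ▸ hmu (mem hal.le) (mem (by omega)) hls)
      (hmu (mem (by omega)) (mem (by omega)) hsb)

theorem specht_gap_lemma_general (m r k j : ℕ) (lam mu : ℕ → ℕ)
    (hlam_zero : ∀ i, m < i → lam i = 0)
    (hmu_anti : ∀ a b, 1 ≤ a → a ≤ b → mu b ≤ mu a)
    (hmu_pos : 0 < mu r)
    (hdom : ∀ s, ∑ i ∈ Finset.Icc 1 s, mu i ≤ ∑ i ∈ Finset.Icc 1 s, lam i)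
    (hmu1 : mu 1 = lam 1)
    (hk : IsLeast {d | ∃ i, 2 ≤ i ∧ i ≤ m ∧ d = lam (i - 1) - lam i} k)
    (hj : 2 ≤ j) (hjr : j ≤ r)
    (hgap : mu (j - 1) - mu j < k) :
    3 ≤ j ∧ ∃ l, 1 < l ∧ l < j ∧ mu l < mu (l - 1) ∧
      (∀ s, l ≤ s → s ≤ j - 1 → mu s = mu l) ∧
      (∀ s, l ≤ s → s ≤ j - 1 →
        ∑ i ∈ Finset.Icc 1 s, mu i < ∑ i ∈ Finset.Icc 1 s, lam i) := by
  have strict : ∀ s, 1 ≤ s → s < j → mu s - mu (s + 1) < k →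
      ∑ i ∈ Icc 1 s, mu i < ∑ i ∈ Icc 1 s, lam i := fun s hs hsj =>
    sum_Icc_lt_of_sub_lt (fun i hi him => hk.2 ⟨i, hi, him, rfl⟩) hlam_zero hdom hs
      (hmu_pos.trans_le (hmu_anti _ _ (by omega) (by omega)))
  have not_strict_one : ¬ ∑ i ∈ Icc 1 1, mu i < ∑ i ∈ Icc 1 1, lam i := by simp [hmu1]
  have hj3 : 3 ≤ j := by
    by_contra hj3
    obtain rfl : j = 2 := by omega
    exact not_strict_one (strict 1 le_rfl (by omega) hgap)
  have htop : mu (j - 1) < mu 1 := by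
    refine (hmu_anti 1 (j - 1) le_rfl (by omega)).lt_of_ne fun h => not_strict_one ?_
    have := hmu_anti 2 (j - 1) (by omega) (by omega)
    have := hmu_anti 1 2 le_rfl (by omega)
    exact strict 1 le_rfl (by omega) (show mu 1 - mu 2 < k by omega)
  obtain ⟨l, hl1, hlj, hdrop, hconst⟩ := exists_start_of_constant_block
    (fun a ha b _ hab => hmu_anti a b ha hab) le_rfl (by omega) htop
  refine ⟨hj3, l, hl1, by omega, hdrop, fun s hls hsj => (hconst s hls hsj).trans
    (hconst l le_rfl hlj).symm, fun s hls hsj => strict s (by omega) (by omega) ?_⟩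
  have := hconst s hls hsj
  have := hmu_anti (s + 1) j (by omega) (by omega)
  omega

/-- Lemma on partitions `μ ⊴ λ` with `μ₁ = λ₁` and small gap `μ_{j-1} - μ_j < k`. -/
theorem specht_gap_lemma (n m r k j : ℕ) (lam mu : ℕ → ℕ)
    (hm : 2 ≤ m)
    (hlam_anti : ∀ a b, 1 ≤ a → a ≤ b → lam b ≤ lam a)
    (hlam_sum : ∑ i ∈ Finset.Icc 1 m, lam i = n)
    (hlam_pos : 0 < lam m)
    (hlam_zero : ∀ i, m < i → lam i = 0)
    (hr : 1 ≤ r)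
    (hmu_anti : ∀ a b, 1 ≤ a → a ≤ b → mu b ≤ mu a)
    (hmu_sum : ∑ i ∈ Finset.Icc 1 r, mu i = n)
    (hmu_pos : 0 < mu r)
    (hmu_zero : ∀ i, r < i → mu i = 0)
    (hdom : ∀ s, ∑ i ∈ Finset.Icc 1 s, mu i ≤ ∑ i ∈ Finset.Icc 1 s, lam i)
    (hne : ∃ i, 1 ≤ i ∧ mu i ≠ lam i)
    (hmu1 : mu 1 = lam 1)
    (hk : IsLeast {d | ∃ i, 2 ≤ i ∧ i ≤ m ∧ d = lam (i - 1) - lam i} k)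
    (hkpos : 0 < k)
    (hj : 2 ≤ j) (hjr : j ≤ r)
    (hgap : mu (j - 1) - mu j < k) :
    3 ≤ j ∧ ∃ l, 1 < l ∧ l < j ∧ mu l < mu (l - 1) ∧
      (∀ s, l ≤ s → s ≤ j - 1 → mu s = mu l) ∧
      (∀ s, l ≤ s → s ≤ j - 1 →
        ∑ i ∈ Finset.Icc 1 s, mu i < ∑ i ∈ Finset.Icc 1 s, lam i) :=
  specht_gap_lemma_general m r k j lam mu hlam_zero hmu_anti hmu_pos hdom hmu1 hk hj hjr hgap
end

section
/- Let λ = (λ₁,…,λ_m) be a partition of n with λ₁ ≥ 2. Define λ̂ by λ̂₁ = λ₁ − 1 and λ̂_i = min{λ̂_{i-1}, λ₁+⋯+λ_i − (λ̂₁+⋯+λ̂_{i-1}) − 1} for i ≥ 2. Then λ̂ is a partition of n − 1 (non-increasing, non-negative, summing to n−1). -/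
/-!
Write `S i` and `H i` for the partial sums `∑_{j ≤ i}` of `λ` and `λ̂`. The cap in the recursion
keeps `H i < S i`. As long as `λ̂` stays positive we have `i ≤ H i`; it can only drop to `0` when
the cap `S (i+1) - H i - 1` vanishes, which forces `λ_{i+1} = 0` and `H i = S i - 1`, and from then
on both partial sums are frozen. At `i = n` positivity is impossible, as it would give
`n ≤ H n < S n ≤ n`; hence `H n = S n - 1 = n - 1`.
-/

open Finset

lemma sum_Icc_one_succ {M : Type*} [AddCommMonoid M] (f : ℕ → M) (i : ℕ) :
    ∑ j ∈ Icc 1 (i + 1), f j = ∑ j ∈ Icc 1 i, f j + f (i + 1) :=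
  sum_Icc_succ_top (by omega) f

lemma sum_Icc_one_eq_of_forall_gt_eq_zero {M : Type*} [AddCommMonoid M] {f : ℕ → M} {k j : ℕ}
    (hf : ∀ i, k < i → f i = 0) (hkj : k ≤ j) :
    ∑ i ∈ Icc 1 j, f i = ∑ i ∈ Icc 1 k, f i := by
  refine (sum_subset (Icc_subset_Icc_right hkj) fun i hi hik => hf i ?_).symm
  simp only [mem_Icc, not_and, not_le] at hi hik
  exact hik hi.1

section HatRecursion

variable {lam hat : ℕ → ℕ}
  (hrec : ∀ i, 1 ≤ i → hat (i + 1) =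
    min (hat i) (∑ j ∈ Icc 1 (i + 1), lam j - ∑ j ∈ Icc 1 i, hat j - 1))
include hrec

lemma hat_antitoneOn : AntitoneOn hat (Set.Ici 1) :=
  antitoneOn_nat_Ici_of_succ_le fun i hi => (hrec i hi).le.trans (min_le_left _ _)

lemma sum_hat_lt_sum_lam (h1 : hat 1 < lam 1) {i : ℕ} (hi : 1 ≤ i) :
    ∑ j ∈ Icc 1 i, hat j < ∑ j ∈ Icc 1 i, lam j := by
  induction i, hi using Nat.le_induction with
  | base => simpa using h1
  | succ i hi ih =>
    have hcap := (hrec i hi).le.trans (min_le_right _ _)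
    simp only [sum_Icc_one_succ] at hcap ⊢
    omega

lemma hat_pos_or_sums_frozen (hlam : AntitoneOn lam (Set.Ici 1)) (h0 : 0 < hat 1)
    (h1 : hat 1 < lam 1) {i : ℕ} (hi : 1 ≤ i) :
    (0 < hat i ∧ i ≤ ∑ j ∈ Icc 1 i, hat j) ∨
      (lam i = 0 ∧ ∑ j ∈ Icc 1 i, hat j + 1 = ∑ j ∈ Icc 1 i, lam j) := by
  induction i, hi using Nat.le_induction with
  | base => left; rw [Icc_self, sum_singleton]; exact ⟨h0, h0⟩
  | succ i hi ih =>
    have hlt := sum_hat_lt_sum_lam hrec h1 hi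
    have hstep := hrec i hi
    have hlam_succ : lam (i + 1) ≤ lam i :=
      hlam (Set.mem_Ici.2 hi) (Set.mem_Ici.2 (by omega)) (by omega)
    simp only [sum_Icc_one_succ] at hstep ⊢
    omega

end HatRecursion

theorem hat_is_partition_general (n m : ℕ) (lam hat : ℕ → ℕ)
    (hlam_anti : ∀ a b, 1 ≤ a → a ≤ b → lam b ≤ lam a)
    (hlam_sum : ∑ i ∈ Finset.Icc 1 m, lam i = n)
    (hlam_zero : ∀ i, m < i → lam i = 0)
    (hlam1 : 2 ≤ lam 1)
    (hhat1 : hat 1 = lam 1 - 1)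
    (hhatrec : ∀ i, 2 ≤ i → hat i =
      min (hat (i - 1))
        ((∑ j ∈ Finset.Icc 1 i, lam j) - (∑ j ∈ Finset.Icc 1 (i - 1), hat j) - 1)) :
    (∀ a b, 1 ≤ a → a ≤ b → hat b ≤ hat a) ∧
    (∑ i ∈ Finset.Icc 1 n, hat i = n - 1) := by
  have hrec : ∀ i, 1 ≤ i → hat (i + 1) =
      min (hat i) (∑ j ∈ Icc 1 (i + 1), lam j - ∑ j ∈ Icc 1 i, hat j - 1) :=
    fun i hi => hhatrec (i + 1) (by omega)
  have hlam : AntitoneOn lam (Set.Ici 1) := fun a ha b _ hab => hlam_anti a b ha hab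
  refine ⟨fun a b ha hab => hat_antitoneOn hrec ha (le_trans ha hab : 1 ≤ b) hab, ?_⟩
  rcases Nat.eq_zero_or_pos n with rfl | hn
  · simp
  have hS_max : ∑ j ∈ Icc 1 (max n m), lam j = n :=
    (sum_Icc_one_eq_of_forall_gt_eq_zero hlam_zero (le_max_right n m)).trans hlam_sum
  rcases hat_pos_or_sums_frozen hrec hlam (by omega) (by omega) hn with
    ⟨-, hge⟩ | ⟨hzero, hfrozen⟩
  · have hS_le : ∑ j ∈ Icc 1 n, lam j ≤ n :=
      (sum_le_sum_of_subset (Icc_subset_Icc_right (le_max_left n m))).trans hS_max.le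
    have := sum_hat_lt_sum_lam hrec (by omega) hn
    omega
  · have hlam_vanish : ∀ i, n < i → lam i = 0 := fun i hi =>
      Nat.eq_zero_of_le_zero (hzero ▸ hlam_anti n i hn hi.le)
    rw [← sum_Icc_one_eq_of_forall_gt_eq_zero hlam_vanish (le_max_left n m), hS_max] at hfrozen
    omega

/-- the sequence `λ̂` defined by `λ̂₁ = λ₁ - 1` and
`λ̂ᵢ = min(λ̂_{i-1}, Σ_{j≤i} λⱼ - Σ_{j<i} λ̂ⱼ - 1)` is a partition of `n - 1`. -/
theorem hat_is_partition (n m : ℕ) (lam hat : ℕ → ℕ)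
    (hm : 1 ≤ m)
    (hlam_anti : ∀ a b, 1 ≤ a → a ≤ b → lam b ≤ lam a)
    (hlam_sum : ∑ i ∈ Finset.Icc 1 m, lam i = n)
    (hlam_pos : 0 < lam m)
    (hlam_zero : ∀ i, m < i → lam i = 0)
    (hlam1 : 2 ≤ lam 1)
    (hhat1 : hat 1 = lam 1 - 1)
    (hhatrec : ∀ i, 2 ≤ i → hat i =
      min (hat (i - 1))
        ((∑ j ∈ Finset.Icc 1 i, lam j) - (∑ j ∈ Finset.Icc 1 (i - 1), hat j) - 1)) :
    (∀ a b, 1 ≤ a → a ≤ b → hat b ≤ hat a) ∧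
    (∑ i ∈ Finset.Icc 1 n, hat i = n - 1) :=
  hat_is_partition_general n m lam hat hlam_anti hlam_sum hlam_zero hlam1 hhat1 hhatrec
end

section
/- Let λ be a partition of n with λ₁ ≥ 2 and λ̂ as defined (λ̂₁ = λ₁−1, λ̂_i = min{λ̂_{i-1}, Σ_{j≤i}λ_j − Σ_{j<i}λ̂_j − 1}). Then λ̂ is the maximum, in the dominance order on partitions of n−1, of the set of partitions μ' arising as follows: μ' is obtained from a partition μ of n with μ ⊴ λ and μ₁ > μ₂ by setting μ'₁ = μ₁ − 1 and μ'_i = μ_i for i ≥ 2. -/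
/-!
`λ̂` is the greedy partition: each part is as large as antitonicity and the strict bounds
`λ̂₁ + ⋯ + λ̂ₖ < λ₁ + ⋯ + λₖ` allow. Adding a box to its first row therefore gives some `μ ⊴ λ`
with `μ₁ > μ₂`. The key invariant is that whenever `λ̂ₖ < λ̂₁` the `k`-th bound is attained.
So if some admissible `μ'` first overtook `λ̂` at step `k`, the `k`-th bound would have slack,
forcing `λ̂ₖ = λ̂₁ ≥ μ'₁ ≥ μ'ₖ`, which contradicts `μ'` overtaking `λ̂` there.
-/

open Set

def psum (f : ℕ → ℕ) (s : ℕ) : ℕ := ∑ i ∈ Finset.Icc 1 s, f i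

section psum

variable {f g : ℕ → ℕ}

@[simp]
theorem psum_zero : psum f 0 = 0 := by simp [psum]

theorem psum_succ (s : ℕ) : psum f (s + 1) = psum f s + f (s + 1) :=
  Finset.sum_Icc_succ_top (by omega) f

@[simp]
theorem psum_one : psum f 1 = f 1 := by simp [psum]

theorem psum_mono {a b : ℕ} (hab : a ≤ b) : psum f a ≤ psum f b :=
  Finset.sum_le_sum_of_subset (Finset.Icc_subset_Icc_right hab)

theorem psum_eq_of_forall_gt_eq_zero {N k : ℕ} (hf : ∀ i, N < i → f i = 0) (hk : N ≤ k) :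
    psum f k = psum f N :=
  (Finset.sum_subset (Finset.Icc_subset_Icc_right hk) fun i hi hiN =>
    hf i (by simp only [Finset.mem_Icc] at hi hiN; omega)).symm

theorem AntitoneOn.mul_le_psum (hf : AntitoneOn f (Ici 1)) (k : ℕ) : k * f k ≤ psum f k := by
  calc k * f k = ∑ _i ∈ Finset.Icc 1 k, f k := by simp
    _ ≤ psum f k := Finset.sum_le_sum fun i hi => by
        simp only [Finset.mem_Icc] at hi
        exact hf (mem_Ici.2 hi.1) (mem_Ici.2 (hi.1.trans hi.2)) hi.2

theorem eq_zero_of_psum_eq {N c : ℕ} (hf : ∀ k, N ≤ k → psum f k = c) {i : ℕ} (hi : N < i) :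
    f i = 0 := by
  obtain ⟨k, rfl⟩ : ∃ k, i = k + 1 := ⟨i - 1, by omega⟩
  have := hf (k + 1) (by omega)
  rw [psum_succ, hf k (by omega)] at this
  omega

theorem psum_add_one_eq (h1 : f 1 + 1 = g 1) (h2 : ∀ i, 2 ≤ i → f i = g i) {s : ℕ}
    (hs : 1 ≤ s) : psum f s + 1 = psum g s := by
  induction s, hs using Nat.le_induction with
  | base => simpa using h1
  | succ s _ ih => rw [psum_succ, psum_succ, ← ih, h2 (s + 1) (by omega)]; ring

theorem psum_update_one {s : ℕ} (hs : 1 ≤ s) :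
    psum (Function.update f 1 (f 1 + 1)) s = psum f s + 1 :=
  (psum_add_one_eq (by simp) (fun i hi => (Function.update_of_ne (by omega) _ _).symm) hs).symm

theorem antitoneOn_update_one (hf : AntitoneOn f (Ici 1)) :
    AntitoneOn (Function.update f 1 (f 1 + 1)) (Ici 1) := by
  intro a ha b hb hab
  rcases eq_or_ne b 1 with rfl | hb1
  · simp [show a = 1 by simp only [mem_Ici] at ha; omega]
  · rcases eq_or_ne a 1 with rfl | ha1
    · simp only [Function.update_of_ne hb1, Function.update_self]
      exact (hf ha hb hab).trans (Nat.le_succ _)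
    · simpa [Function.update_of_ne hb1, Function.update_of_ne ha1] using hf ha hb hab

theorem AntitoneOn.psum_eq_of_le (hf : AntitoneOn f (Ici 1)) {m n : ℕ} (hsum : psum f m = n)
    (hzero : ∀ i, m < i → f i = 0) {k : ℕ} (hk : n ≤ k) : psum f k = n := by
  have hbound : ∀ k, psum f k ≤ n := fun k => by
    rw [← hsum, ← psum_eq_of_forall_gt_eq_zero hzero (le_max_right k m)]
    exact psum_mono (le_max_left k m)
  have hvanish : ∀ i, n < i → f i = 0 := by
    intro i hi
    by_contra hne
    have := (hf.mul_le_psum i).trans (hbound i)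
    have : i ≤ i * f i := Nat.le_mul_of_pos_right i (Nat.pos_of_ne_zero hne)
    omega
  calc psum f k = psum f (max n m) := by
        rw [psum_eq_of_forall_gt_eq_zero hvanish hk,
          psum_eq_of_forall_gt_eq_zero hvanish (le_max_left n m)]
    _ = n := by rw [psum_eq_of_forall_gt_eq_zero hzero (le_max_right n m), hsum]

end psum

structure IsHat (lam hat : ℕ → ℕ) : Prop where
  one : hat 1 = lam 1 - 1
  succ : ∀ i, 1 ≤ i → hat (i + 1) = min (hat i) (psum lam (i + 1) - psum hat i - 1)

namespace IsHat

variable {lam hat : ℕ → ℕ}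

theorem psum_add_one_le (h : IsHat lam hat) (hlam1 : 1 ≤ lam 1) {s : ℕ} (hs : 1 ≤ s) :
    psum hat s + 1 ≤ psum lam s := by
  induction s, hs using Nat.le_induction with
  | base => rw [psum_one, psum_one, h.one]; omega
  | succ s hs ih =>
    have hrec := h.succ s hs
    rw [psum_succ (f := lam)] at hrec ⊢
    rw [psum_succ]
    omega

theorem antitoneOn (h : IsHat lam hat) : AntitoneOn hat (Ici 1) := by
  refine antitoneOn_nat_Ici_of_succ_le fun i hi => ?_
  rw [h.succ i hi]
  exact min_le_left _ _

/-- `lam k ≤ hat k` is what propagates tightness: after a tight step the next cap is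
`lam (k + 1) ≤ hat k`, so the next step is tight as well. -/
theorem eq_one_or_tight (h : IsHat lam hat) (hlam : AntitoneOn lam (Ici 1))
    (hlam1 : 1 ≤ lam 1) {k : ℕ} (hk : 1 ≤ k) :
    hat k = hat 1 ∨ (psum hat k + 1 = psum lam k ∧ lam k ≤ hat k) := by
  induction k, hk using Nat.le_induction with
  | base => exact .inl rfl
  | succ k hk ih =>
    have hrec := h.succ k hk
    have hgap := h.psum_add_one_le hlam1 hk
    have hlamk : lam (k + 1) ≤ lam k :=
      hlam (mem_Ici.2 hk) (mem_Ici.2 (by omega)) (by omega)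
    rw [psum_succ] at hrec ⊢
    rw [psum_succ]
    omega

theorem eq_one_of_slack (h : IsHat lam hat) (hlam : AntitoneOn lam (Ici 1))
    (hlam1 : 1 ≤ lam 1) {k : ℕ} (hk : 1 ≤ k) (hslack : psum hat k + 1 < psum lam k) :
    hat k = hat 1 := by
  have := h.eq_one_or_tight hlam hlam1 hk
  omega

theorem psum_le (h : IsHat lam hat) (hlam : AntitoneOn lam (Ici 1)) {nu : ℕ → ℕ}
    (hnu : ∀ i, 1 ≤ i → nu i ≤ nu 1) (hdom : ∀ s, 1 ≤ s → psum nu s + 1 ≤ psum lam s)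
    (s : ℕ) : psum nu s ≤ psum hat s := by
  induction s with
  | zero => simp
  | succ s ih =>
    by_contra! hlt
    have hslack : psum hat (s + 1) + 1 < psum lam (s + 1) :=
      lt_of_lt_of_le (by omega) (hdom (s + 1) (by omega))
    have hnu1 : nu 1 + 1 ≤ lam 1 := by simpa using hdom 1 le_rfl
    have hfirst := h.eq_one_of_slack hlam (by omega) (by omega) hslack
    have hnu_le := hnu (s + 1) (by omega)
    rw [psum_succ, psum_succ] at hlt
    have := h.one
    omega

theorem psum_add_one_eq_total (h : IsHat lam hat) (hlam : AntitoneOn lam (Ici 1))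
    (hlam1 : 2 ≤ lam 1) {n : ℕ} (hn : ∀ k, n ≤ k → psum lam k = n) {k : ℕ} (hk : n ≤ k) :
    psum hat k + 1 = n := by
  have hn1 : 1 ≤ n := by
    by_contra! h0
    have := h.psum_add_one_le (by omega) le_rfl
    rw [hn 1 (by omega)] at this
    omega
  induction k, hk using Nat.le_induction with
  | base =>
    have hgap := h.psum_add_one_le (by omega) hn1
    rcases h.eq_one_or_tight hlam (by omega) hn1 with hfirst | ⟨htight, -⟩
    · have hpos : 1 ≤ hat n := by rw [hfirst, h.one]; omega
      have := (Nat.mul_le_mul_left n hpos).trans (h.antitoneOn.mul_le_psum n)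
      rw [hn n le_rfl] at hgap
      omega
    · exact htight.trans (hn n le_rfl)
  | succ k hk ih =>
    have hgap := h.psum_add_one_le (by omega) (s := k + 1) (by omega)
    rw [hn (k + 1) (by omega)] at hgap
    have := psum_mono (f := hat) (by omega : k ≤ k + 1)
    omega

end IsHat

theorem hat_is_maximum_general (n m : ℕ) (lam hat : ℕ → ℕ)
    (hlam_anti : ∀ a b, 1 ≤ a → a ≤ b → lam b ≤ lam a)
    (hlam_sum : ∑ i ∈ Finset.Icc 1 m, lam i = n)
    (hlam_zero : ∀ i, m < i → lam i = 0)
    (hlam1 : 2 ≤ lam 1)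
    (hhat1 : hat 1 = lam 1 - 1)
    (hhatrec : ∀ i, 2 ≤ i → hat i =
      min (hat (i - 1))
        ((∑ j ∈ Finset.Icc 1 i, lam j) - (∑ j ∈ Finset.Icc 1 (i - 1), hat j) - 1)) :
    hat ∈ {nu : ℕ → ℕ | ∃ mu : ℕ → ℕ,
        (∀ a b, 1 ≤ a → a ≤ b → mu b ≤ mu a) ∧
        (∑ i ∈ Finset.Icc 1 n, mu i = n) ∧ (∀ i, n < i → mu i = 0) ∧
        (∀ s, ∑ i ∈ Finset.Icc 1 s, mu i ≤ ∑ i ∈ Finset.Icc 1 s, lam i) ∧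
        mu 2 < mu 1 ∧ nu 1 = mu 1 - 1 ∧ (∀ i, 2 ≤ i → nu i = mu i)} ∧
    ∀ nu ∈ {nu : ℕ → ℕ | ∃ mu : ℕ → ℕ,
        (∀ a b, 1 ≤ a → a ≤ b → mu b ≤ mu a) ∧
        (∑ i ∈ Finset.Icc 1 n, mu i = n) ∧ (∀ i, n < i → mu i = 0) ∧
        (∀ s, ∑ i ∈ Finset.Icc 1 s, mu i ≤ ∑ i ∈ Finset.Icc 1 s, lam i) ∧
        mu 2 < mu 1 ∧ nu 1 = mu 1 - 1 ∧ (∀ i, 2 ≤ i → nu i = mu i)},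
      ∀ s, ∑ i ∈ Finset.Icc 1 s, nu i ≤ ∑ i ∈ Finset.Icc 1 s, hat i := by
  have hlam : AntitoneOn lam (Ici 1) := fun a ha b _ hab => hlam_anti a b ha hab
  have h : IsHat lam hat := ⟨hhat1, fun i hi => by simpa [psum] using hhatrec (i + 1) (by omega)⟩
  have htotal : ∀ k, n ≤ k → psum hat k + 1 = n := fun _ =>
    h.psum_add_one_eq_total hlam hlam1 fun _ => hlam.psum_eq_of_le hlam_sum hlam_zero
  have hn : 1 ≤ n := by
    by_contra! h0
    have := htotal 0 (by omega)
    rw [psum_zero] at this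
    omega
  refine ⟨⟨Function.update hat 1 (hat 1 + 1), fun a b ha hab => ?_, ?_, fun i hi => ?_,
    fun s => ?_, ?_, by simp, fun i hi => (Function.update_of_ne (by omega) _ _).symm⟩, ?_⟩
  · exact antitoneOn_update_one h.antitoneOn ha (le_trans ha hab) hab
  · exact (psum_update_one hn).trans (htotal n le_rfl)
  · rw [Function.update_of_ne (by omega)]
    exact eq_zero_of_psum_eq (c := n - 1) (fun k hk => by have := htotal k hk; omega) hi
  · rcases Nat.eq_zero_or_pos s with rfl | hs
    · simp
    · exact (psum_update_one hs).trans_le (h.psum_add_one_le (by omega) hs)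
  · have h21 : hat 2 ≤ hat 1 := h.antitoneOn self_mem_Ici (mem_Ici.2 one_le_two) one_le_two
    simpa using Nat.lt_succ_of_le h21
  · rintro nu ⟨mu, hmu_anti, -, -, hmu_dom, hmu21, hnu1, hnu⟩
    refine h.psum_le hlam (fun i hi => ?_) (fun s hs => ?_)
    · rcases eq_or_lt_of_le hi with rfl | hi
      · rfl
      · rw [hnu i hi, hnu1]
        have := hmu_anti 2 i (by norm_num) hi
        omega
    · exact (psum_add_one_eq (by omega) hnu hs).trans_le (hmu_dom s)

/-- `λ̂` is the maximum, in dominance order on partitions of `n - 1`,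
of the partitions `μ'` obtained from partitions `μ ⊴ λ` of `n` with `μ₁ > μ₂`
by decreasing the first part by one. -/
theorem hat_is_maximum (n m : ℕ) (lam hat : ℕ → ℕ)
    (hm : 1 ≤ m)
    (hlam_anti : ∀ a b, 1 ≤ a → a ≤ b → lam b ≤ lam a)
    (hlam_sum : ∑ i ∈ Finset.Icc 1 m, lam i = n)
    (hlam_pos : 0 < lam m)
    (hlam_zero : ∀ i, m < i → lam i = 0)
    (hlam1 : 2 ≤ lam 1)
    (hhat1 : hat 1 = lam 1 - 1)
    (hhatrec : ∀ i, 2 ≤ i → hat i =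
      min (hat (i - 1))
        ((∑ j ∈ Finset.Icc 1 i, lam j) - (∑ j ∈ Finset.Icc 1 (i - 1), hat j) - 1)) :
    hat ∈ {nu : ℕ → ℕ | ∃ mu : ℕ → ℕ,
        (∀ a b, 1 ≤ a → a ≤ b → mu b ≤ mu a) ∧
        (∑ i ∈ Finset.Icc 1 n, mu i = n) ∧ (∀ i, n < i → mu i = 0) ∧
        (∀ s, ∑ i ∈ Finset.Icc 1 s, mu i ≤ ∑ i ∈ Finset.Icc 1 s, lam i) ∧
        mu 2 < mu 1 ∧ nu 1 = mu 1 - 1 ∧ (∀ i, 2 ≤ i → nu i = mu i)} ∧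
    ∀ nu ∈ {nu : ℕ → ℕ | ∃ mu : ℕ → ℕ,
        (∀ a b, 1 ≤ a → a ≤ b → mu b ≤ mu a) ∧
        (∑ i ∈ Finset.Icc 1 n, mu i = n) ∧ (∀ i, n < i → mu i = 0) ∧
        (∀ s, ∑ i ∈ Finset.Icc 1 s, mu i ≤ ∑ i ∈ Finset.Icc 1 s, lam i) ∧
        mu 2 < mu 1 ∧ nu 1 = mu 1 - 1 ∧ (∀ i, 2 ≤ i → nu i = mu i)},
      ∀ s, ∑ i ∈ Finset.Icc 1 s, nu i ≤ ∑ i ∈ Finset.Icc 1 s, hat i :=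
  hat_is_maximum_general n m lam hat hlam_anti hlam_sum hlam_zero hlam1 hhat1 hhatrec
end

section
/- Let λ ⊢ n, fix σ ∈ S_n, and for i ∈ {1,…,n} define d_λ(i) = Σ_{T ∈ STab(λ)} deg_i(in(f_T)), where STab(λ) is the set of standard tableaux of shape λ with respect to the order σ(1) ≺ ⋯ ≺ σ(n) and in(f_T) = ∏_j x_j^{(row of j in T) − 1}. Then d_λ(σ(i)) ≤ d_λ(σ(i+1)) for all 1 ≤ i < n. -/
/-- `(i, j)` (row `i`, column `j`, both 1-indexed) is a box of the Young diagram of `lam`. -/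
def IsCell (lam : ℕ → ℕ) (p : ℕ × ℕ) : Prop :=
  1 ≤ p.1 ∧ 1 ≤ p.2 ∧ p.2 ≤ lam p.1

/-- `T` is a bijective filling of the Young diagram of `lam` by `{1, …, n}`. -/
def IsFilling (n : ℕ) (lam : ℕ → ℕ) (T : ℕ × ℕ → ℕ) : Prop :=
  (∀ p, IsCell lam p → T p ∈ Finset.Icc 1 n) ∧
  (∀ p q, IsCell lam p → IsCell lam q → T p = T q → p = q) ∧
  (∀ v ∈ Finset.Icc 1 n, ∃ p, IsCell lam p ∧ T p = v)

/-- Rows of `T` increase left to right in the order `σ(1) ≺ σ(2) ≺ ⋯`. -/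
def RowStd (σ : Equiv.Perm ℕ) (lam : ℕ → ℕ) (T : ℕ × ℕ → ℕ) : Prop :=
  ∀ i j, 1 ≤ j → IsCell lam (i, j + 1) → σ.symm (T (i, j)) < σ.symm (T (i, j + 1))

/-- Columns of `T` increase top to bottom in the order `σ(1) ≺ σ(2) ≺ ⋯`. -/
def ColStd (σ : Equiv.Perm ℕ) (lam : ℕ → ℕ) (T : ℕ × ℕ → ℕ) : Prop :=
  ∀ i j, 1 ≤ i → IsCell lam (i + 1, j) → σ.symm (T (i, j)) < σ.symm (T (i + 1, j))

/-- `T` is a standard tableau of shape `lam` w.r.t. the order `σ(1) ≺ ⋯ ≺ σ(n)`. -/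
def IsStd (σ : Equiv.Perm ℕ) (n : ℕ) (lam : ℕ → ℕ) (T : ℕ × ℕ → ℕ) : Prop :=
  IsFilling n lam T ∧ RowStd σ lam T ∧ ColStd σ lam T

/-- `d_λ(v) = Σ_{T ∈ STab(λ)} deg_v(in(f_T))`, where `deg_v(in(f_T))` is
(row of `v` in `T`) − 1; tableaux are normalized to vanish off the diagram. -/
noncomputable def dlam (n : ℕ) (σ : Equiv.Perm ℕ) (lam : ℕ → ℕ) (v : ℕ) : ℕ :=
  ∑ᶠ T ∈ {T : ℕ × ℕ → ℕ | IsStd σ n lam T ∧ ∀ p, ¬ IsCell lam p → T p = 0},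
    (sSup {i | ∃ c, IsCell lam (i, c) ∧ T (i, c) = v} - 1)

/-!
Exchanging the entries `σ i ≺ σ (i + 1)` of a standard tableau, unless they share a row or a
column, is an involution of `STab(λ)`. If they share a line, `σ i` lies weakly above
`σ (i + 1)`; otherwise the exchange moves `σ (i + 1)` into the row of `σ i`. So the row of `σ i`
in `T` is at most the row of `σ (i + 1)` in the image of `T`, and summing over the involution
gives the inequality.
-/

open Finset Function

section Tableaux

variable {n : ℕ} {σ : Equiv.Perm ℕ} {lam : ℕ → ℕ} {T : ℕ × ℕ → ℕ}

lemma IsCell.left {r j : ℕ} (hj : 1 ≤ j) (h : IsCell lam (r, j + 1)) : IsCell lam (r, j) :=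
  ⟨h.1, hj, (Nat.le_succ j).trans h.2.2⟩

lemma IsCell.up (hanti : ∀ a b, 1 ≤ a → a ≤ b → lam b ≤ lam a) {r j : ℕ} (hr : 1 ≤ r)
    (h : IsCell lam (r + 1, j)) : IsCell lam (r, j) :=
  ⟨hr, h.2.1, h.2.2.trans (hanti r (r + 1) hr (Nat.le_succ r))⟩

noncomputable def rowOf (lam : ℕ → ℕ) (T : ℕ × ℕ → ℕ) (v : ℕ) : ℕ :=
  sSup {i | ∃ c, IsCell lam (i, c) ∧ T (i, c) = v}

lemma IsFilling.rowOf_eq (hT : IsFilling n lam T) {p : ℕ × ℕ} {v : ℕ} (hp : IsCell lam p)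
    (hv : T p = v) : rowOf lam T v = p.1 := by
  have hrows : {i | ∃ c, IsCell lam (i, c) ∧ T (i, c) = v} = {p.1} := by
    ext r
    refine ⟨fun ⟨c, hc, hvc⟩ ↦ congrArg Prod.fst (hT.2.1 (r, c) p hc hp (hvc.trans hv.symm)), ?_⟩
    rintro rfl
    exact ⟨p.2, hp, hv⟩
  rw [rowOf, hrows, csSup_singleton]

lemma IsStd.lt_of_lt_row (hanti : ∀ a b, 1 ≤ a → a ≤ b → lam b ≤ lam a)
    (hT : IsStd σ n lam T) {c r r' : ℕ} (hr : 1 ≤ r) (hrr' : r < r')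
    (hcell : IsCell lam (r', c)) :
    σ.symm (T (r, c)) < σ.symm (T (r', c)) := by
  induction r', hrr' using Nat.le_induction with
  | base => exact hT.2.2 r c hr hcell
  | succ k hk ih => exact (ih (hcell.up hanti (by omega))).trans (hT.2.2 k c (by omega) hcell)

/-- `STab(λ)`, the index set of the sum defining `dlam`. -/
def stdTableaux (σ : Equiv.Perm ℕ) (n : ℕ) (lam : ℕ → ℕ) : Set (ℕ × ℕ → ℕ) :=
  {T | IsStd σ n lam T ∧ ∀ p, ¬ IsCell lam p → T p = 0}

/-- A filling injects the diagram into `{1, …, n}`, so the diagram is finite, and a tableau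
vanishing off the diagram is determined by finitely many values in `{0, …, n}`. -/
lemma stdTableaux_finite : (stdTableaux σ n lam).Finite := by
  rcases (stdTableaux σ n lam).eq_empty_or_nonempty with hS | ⟨T₀, hT₀⟩
  · exact hS ▸ Set.finite_empty
  have hcells : {p | IsCell lam p}.Finite :=
    (Set.finite_Icc 1 n).of_injOn (fun p hp ↦ by simpa using hT₀.1.1.1 p hp)
      (fun p hp q hq h ↦ hT₀.1.1.2.1 p q hp hq h)
  have : Finite {p | IsCell lam p} := hcells.to_subtype
  refine Set.Finite.of_finite_image (f := fun T (p : {p | IsCell lam p}) ↦ T p)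
    ((Set.Finite.pi' fun _ ↦ Set.finite_Iic n).subset ?_) ?_
  · rintro _ ⟨T, hT, rfl⟩ p
    exact (Finset.mem_Icc.mp (hT.1.1.1 p p.2)).2
  · intro T hT T' hT' h
    funext p
    by_cases hp : IsCell lam p
    · exact congrFun h ⟨p, hp⟩
    · rw [hT.2 p hp, hT'.2 p hp]

lemma IsFilling.perm_comp (hT : IsFilling n lam T) {τ : Equiv.Perm ℕ}
    (hτ : ∀ v, v ∈ Icc 1 n ↔ τ v ∈ Icc 1 n) : IsFilling n lam (τ ∘ T) := by
  refine ⟨fun p hp ↦ (hτ _).mp (hT.1 p hp), fun p q hp hq h ↦ hT.2.1 p q hp hq (τ.injective h),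
    fun v hv ↦ ?_⟩
  obtain ⟨p, hp, hTp⟩ := hT.2.2 (τ.symm v) ((hτ _).mpr (by simpa using hv))
  exact ⟨p, hp, by simp [hTp]⟩

def SameLine (lam : ℕ → ℕ) (T : ℕ × ℕ → ℕ) (a b : ℕ) : Prop :=
  ∃ p q, IsCell lam p ∧ IsCell lam q ∧ T p = a ∧ T q = b ∧ (p.1 = q.1 ∨ p.2 = q.2)

lemma SameLine.symm {a b : ℕ} (h : SameLine lam T a b) : SameLine lam T b a :=
  let ⟨p, q, hp, hq, ha, hb, hline⟩ := h
  ⟨q, p, hq, hp, hb, ha, hline.imp Eq.symm Eq.symm⟩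

lemma sameLine_swap_comp {a b : ℕ} :
    SameLine lam (Equiv.swap a b ∘ T) a b ↔ SameLine lam T a b := by
  have : SameLine lam (Equiv.swap a b ∘ T) a b ↔ SameLine lam T b a := by
    simp only [SameLine, comp_apply, Equiv.swap_apply_eq_iff, Equiv.swap_apply_left,
      Equiv.swap_apply_right]
  exact this.trans ⟨SameLine.symm, SameLine.symm⟩

lemma Equiv.swap_succ_lt_swap_succ {i u v : ℕ} (huv : u < v) (h : ¬(u = i ∧ v = i + 1)) :
    Equiv.swap i (i + 1) u < Equiv.swap i (i + 1) v := by
  simp only [Equiv.swap_apply_def]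
  split_ifs <;> omega

lemma IsStd.swap_comp (hanti : ∀ a b, 1 ≤ a → a ≤ b → lam b ≤ lam a) (hT : IsStd σ n lam T)
    {i : ℕ} (ha : σ i ∈ Icc 1 n) (hb : σ (i + 1) ∈ Icc 1 n)
    (hline : ¬ SameLine lam T (σ i) (σ (i + 1))) :
    IsStd σ n lam (Equiv.swap (σ i) (σ (i + 1)) ∘ T) := by
  -- Exchanging the `≺`-consecutive entries `σ i ≺ σ (i + 1)` reverses the order of that pair
  -- only.
  have hconj : ∀ x,
      σ.symm (Equiv.swap (σ i) (σ (i + 1)) x) = Equiv.swap i (i + 1) (σ.symm x) := by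
    intro x
    simp [Equiv.swap_apply_apply, Equiv.Perm.mul_apply]
  have hlt : ∀ p q, IsCell lam p → IsCell lam q → (p.1 = q.1 ∨ p.2 = q.2) →
      σ.symm (T p) < σ.symm (T q) →
      σ.symm (Equiv.swap (σ i) (σ (i + 1)) (T p)) <
        σ.symm (Equiv.swap (σ i) (σ (i + 1)) (T q)) := by
    intro p q hp hq hpq h
    rw [hconj, hconj]
    refine Equiv.swap_succ_lt_swap_succ h fun ⟨hpi, hqi⟩ ↦ hline ⟨p, q, hp, hq, ?_, ?_, hpq⟩
    · rw [← hpi, σ.apply_symm_apply]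
    · rw [← hqi, σ.apply_symm_apply]
  have hswap : ∀ v, v ∈ Icc 1 n ↔ Equiv.swap (σ i) (σ (i + 1)) v ∈ Icc 1 n := by
    intro v
    rcases eq_or_ne v (σ i) with rfl | hv
    · simpa using iff_of_true ha hb
    rcases eq_or_ne v (σ (i + 1)) with rfl | hv'
    · simpa using iff_of_true hb ha
    rw [Equiv.swap_apply_of_ne_of_ne hv hv']
  exact ⟨hT.1.perm_comp hswap,
    fun r j hj hc ↦ hlt _ _ (hc.left hj) hc (Or.inl rfl) (hT.2.1 r j hj hc),
    fun r j hr hc ↦ hlt _ _ (hc.up hanti hr) hc (Or.inr rfl) (hT.2.2 r j hr hc)⟩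

lemma rowOf_perm_comp (τ : Equiv.Perm ℕ) (v : ℕ) : rowOf lam (τ ∘ T) (τ v) = rowOf lam T v := by
  simp only [rowOf, comp_apply, τ.apply_eq_iff_eq]

lemma IsStd.rowOf_le_rowOf_of_sameLine (hanti : ∀ a b, 1 ≤ a → a ≤ b → lam b ≤ lam a)
    (hT : IsStd σ n lam T) {a b : ℕ} (hab : σ.symm a < σ.symm b) (h : SameLine lam T a b) :
    rowOf lam T a ≤ rowOf lam T b := by
  obtain ⟨⟨r, c⟩, ⟨r', c'⟩, hp, hq, hpa, hqb, hline⟩ := h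
  rw [hT.1.rowOf_eq hp hpa, hT.1.rowOf_eq hq hqb]
  rcases hline with hrow | hcol
  · exact hrow.le
  · obtain rfl : c = c' := hcol
    by_contra! hr'r
    have := hT.lt_of_lt_row hanti hq.1 hr'r hp
    rw [hpa, hqb] at this
    exact lt_asymm hab this

open Classical in
noncomputable def switch (lam : ℕ → ℕ) (a b : ℕ) (T : ℕ × ℕ → ℕ) : ℕ × ℕ → ℕ :=
  if SameLine lam T a b then T else Equiv.swap a b ∘ T

lemma switch_of_sameLine {a b : ℕ} (h : SameLine lam T a b) : switch lam a b T = T :=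
  if_pos h

lemma switch_of_not_sameLine {a b : ℕ} (h : ¬ SameLine lam T a b) :
    switch lam a b T = Equiv.swap a b ∘ T :=
  if_neg h

lemma switch_switch {a b : ℕ} : switch lam a b (switch lam a b T) = T := by
  by_cases h : SameLine lam T a b
  · rw [switch_of_sameLine h, switch_of_sameLine h]
  · rw [switch_of_not_sameLine h, switch_of_not_sameLine (sameLine_swap_comp.not.mpr h)]
    funext p
    exact Equiv.swap_apply_self _ _ _

lemma switch_mem_stdTableaux (hanti : ∀ a b, 1 ≤ a → a ≤ b → lam b ≤ lam a) {i : ℕ}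
    (ha : σ i ∈ Icc 1 n) (hb : σ (i + 1) ∈ Icc 1 n) (hT : T ∈ stdTableaux σ n lam) :
    switch lam (σ i) (σ (i + 1)) T ∈ stdTableaux σ n lam := by
  by_cases h : SameLine lam T (σ i) (σ (i + 1))
  · rwa [switch_of_sameLine h]
  rw [switch_of_not_sameLine h]
  refine ⟨hT.1.swap_comp hanti ha hb h, fun p hp ↦ ?_⟩
  rw [comp_apply, hT.2 p hp]
  exact Equiv.swap_apply_of_ne_of_ne (by simp at ha; omega) (by simp at hb; omega)

lemma rowOf_le_rowOf_switch (hanti : ∀ a b, 1 ≤ a → a ≤ b → lam b ≤ lam a)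
    (hT : IsStd σ n lam T) (i : ℕ) :
    rowOf lam T (σ i) ≤ rowOf lam (switch lam (σ i) (σ (i + 1)) T) (σ (i + 1)) := by
  by_cases h : SameLine lam T (σ i) (σ (i + 1))
  · rw [switch_of_sameLine h]
    exact hT.rowOf_le_rowOf_of_sameLine hanti (by simp) h
  · have := rowOf_perm_comp (lam := lam) (T := T) (Equiv.swap (σ i) (σ (i + 1))) (σ i)
    rw [Equiv.swap_apply_left] at this
    rw [switch_of_not_sameLine h, this]

end Tableaux

theorem dlam_monotone_general (n : ℕ) (lam : ℕ → ℕ) (σ : Equiv.Perm ℕ)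
    (hlam_anti : ∀ a b, 1 ≤ a → a ≤ b → lam b ≤ lam a)
    (hσ : ∀ v, v ∈ Finset.Icc 1 n ↔ σ v ∈ Finset.Icc 1 n) :
    ∀ i, 1 ≤ i → i < n → dlam n σ lam (σ i) ≤ dlam n σ lam (σ (i + 1)) := by
  intro i hi hin
  have ha : σ i ∈ Icc 1 n := (hσ i).mp (by simp; omega)
  have hb : σ (i + 1) ∈ Icc 1 n := (hσ (i + 1)).mp (by simp; omega)
  set S := stdTableaux σ n lam
  have hS : S.Finite := stdTableaux_finite
  have hswitch : Set.BijOn (switch lam (σ i) (σ (i + 1))) S S :=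
    have hmaps : Set.MapsTo (switch lam (σ i) (σ (i + 1))) S S :=
      fun _ ↦ switch_mem_stdTableaux hlam_anti ha hb
    Set.InvOn.bijOn ⟨fun _ _ ↦ switch_switch, fun _ _ ↦ switch_switch⟩ hmaps hmaps
  calc dlam n σ lam (σ i)
      = ∑ T ∈ hS.toFinset, (rowOf lam T (σ i) - 1) :=
        finsum_mem_eq_finite_toFinset_sum _ hS
    _ ≤ ∑ T ∈ hS.toFinset, (rowOf lam (switch lam (σ i) (σ (i + 1)) T) (σ (i + 1)) - 1) :=
        sum_le_sum fun T hT ↦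
          Nat.sub_le_sub_right (rowOf_le_rowOf_switch hlam_anti (hS.mem_toFinset.mp hT).1 i) 1
    _ = ∑ᶠ T ∈ S, (rowOf lam (switch lam (σ i) (σ (i + 1)) T) (σ (i + 1)) - 1) :=
        (finsum_mem_eq_finite_toFinset_sum _ hS).symm
    _ = dlam n σ lam (σ (i + 1)) :=
        finsum_mem_eq_of_bijOn (g := fun T ↦ rowOf lam T (σ (i + 1)) - 1) _ hswitch
          fun _ _ ↦ rfl

/-- `d_λ(σ(i)) ≤ d_λ(σ(i+1))` for all `1 ≤ i < n`. -/
theorem dlam_monotone (n m : ℕ) (lam : ℕ → ℕ) (σ : Equiv.Perm ℕ)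
    (hm : 1 ≤ m)
    (hlam_anti : ∀ a b, 1 ≤ a → a ≤ b → lam b ≤ lam a)
    (hlam_sum : ∑ i ∈ Finset.Icc 1 m, lam i = n)
    (hlam_pos : 0 < lam m)
    (hlam_zero : ∀ i, m < i → lam i = 0)
    (hσ : ∀ v, v ∈ Finset.Icc 1 n ↔ σ v ∈ Finset.Icc 1 n) :
    ∀ i, 1 ≤ i → i < n → dlam n σ lam (σ i) ≤ dlam n σ lam (σ (i + 1)) :=
  dlam_monotone_general n lam σ hlam_anti hσ
end

section
/- Let λ = (λ₁,…,λ_m) ⊢ n with λ₁ > λ₂ > ⋯ > λ_m > 0, m ≥ 2, and set k = min{λ_{i-1} − λ_i : 2 ≤ i ≤ m} and l = λ₁ − λ₂. Assume l > k. Then for every j with n − l < j < n − k and every σ ∈ S_n, there exists a standard tableau T of shape λ (w.r.t. the order σ(1) ≺ ⋯ ≺ σ(n)) in which σ(j−1) and σ(j) lie in the same column. -/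
/-!
Put `σ (j - 1)` at `(p - 1, lam p)` and `σ j` directly below it at `(p, lam p)`, where `p` is a
row with `lam (p - 1) - lam p = k`; the `k` cells to the right of `σ (j - 1)` get
`σ (j + 1), …, σ (j + k)` and the last `t = n - j - k` cells of row `1` get the remaining largest
values. Since `p ≥ 3` (`p = 2` would force `k = l`) and `t ≤ l`, these late cells form an upper
set of the diagram, so filling the remaining `j - 2` cells row by row gives a standard tableau.

Any weight on the cells that is injective and increases along rows and columns yields such a
tableau: fill each cell with `σ` of its rank.
-/

namespace StdTableau

open Finset

section Rank

variable {α β : Type*} [LinearOrder β] (C : Finset α) (w : α → β)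

def rank (x : α) : ℕ := #{y ∈ C | w y ≤ w x}

variable {C w}

lemma rank_lt_rank {x y : α} (hy : y ∈ C) (h : w x < w y) : rank C w x < rank C w y := by
  refine card_lt_card <| (ssubset_iff_of_subset fun z hz ↦ ?_).2 ⟨y, by simp [hy], by simp [h]⟩
  simp only [mem_filter] at hz ⊢
  exact ⟨hz.1, hz.2.trans h.le⟩

lemma rank_mapsTo : Set.MapsTo (rank C w) C (Icc 1 #C : Finset ℕ) := fun x hx ↦
  mem_Icc.2 ⟨card_pos.2 ⟨x, mem_filter.2 ⟨hx, le_rfl⟩⟩, card_filter_le _ _⟩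

lemma rank_injOn (hw : Set.InjOn w C) : Set.InjOn (rank C w) C := by
  intro x hx y hy h
  by_contra hxy
  rcases (hw.ne hx hy hxy).lt_or_gt with hlt | hlt
  · exact (rank_lt_rank hy hlt).ne h
  · exact (rank_lt_rank hx hlt).ne' h

lemma rank_surjOn (hw : Set.InjOn w C) : Set.SurjOn (rank C w) C (Icc 1 #C : Finset ℕ) :=
  surjOn_of_injOn_of_card_le _ rank_mapsTo (rank_injOn hw) (by simp)

lemma rank_add_card_filter_lt (x : α) : rank C w x + #{y ∈ C | w x < w y} = #C := by
  simpa only [rank, not_le] using card_filter_add_card_filter_not (s := C) (w · ≤ w x)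

end Rank

def cells (m : ℕ) (lam : ℕ → ℕ) : Finset (ℕ × ℕ) :=
  (Icc 1 m).biUnion fun i ↦ {i} ×ˢ Icc 1 (lam i)

lemma mem_cells {m : ℕ} {lam : ℕ → ℕ} (hzero : ∀ i, m < i → lam i = 0) {q : ℕ × ℕ} :
    q ∈ cells m lam ↔ IsCell lam q := by
  obtain ⟨i, c⟩ := q
  simp only [cells, mem_biUnion, mem_product, mem_singleton, mem_Icc, IsCell]
  constructor
  · rintro ⟨i, hi, rfl, hc⟩
    omega
  · rintro ⟨hi, hc, hcl⟩
    have him : i ≤ m := by_contra fun h ↦ by have := hzero i (by omega); omega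
    exact ⟨i, ⟨hi, him⟩, rfl, hc, hcl⟩

lemma card_cells (m : ℕ) (lam : ℕ → ℕ) : #(cells m lam) = ∑ i ∈ Icc 1 m, lam i := by
  rw [cells, card_biUnion]
  · simp
  · intro i _ i' _ h
    simp only [disjoint_left, mem_product, mem_singleton]
    rintro _ ⟨rfl, -⟩ ⟨rfl, -⟩
    exact h rfl

theorem isStd_comp_rank {σ : Equiv.Perm ℕ} {n : ℕ} {lam : ℕ → ℕ} {β : Type*} [LinearOrder β]
    (hσ : ∀ v, v ∈ Icc 1 n ↔ σ v ∈ Icc 1 n) {C : Finset (ℕ × ℕ)} (hC : ∀ q, q ∈ C ↔ IsCell lam q)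
    (hn : #C = n) {w : ℕ × ℕ → β} (hw : Set.InjOn w C)
    (hrow : ∀ i c, IsCell lam (i, c + 1) → w (i, c) < w (i, c + 1))
    (hcol : ∀ i c, IsCell lam (i + 1, c) → w (i, c) < w (i + 1, c)) :
    IsStd σ n lam (σ ∘ rank C w) := by
  subst hn
  refine ⟨⟨fun q hq ↦ ?_, fun q q' hq hq' h ↦ ?_, fun v hv ↦ ?_⟩, fun i c _ h ↦ ?_,
    fun i c _ h ↦ ?_⟩
  · exact (hσ _).1 (rank_mapsTo ((hC q).2 hq))
  · exact rank_injOn hw ((hC q).2 hq) ((hC q').2 hq') (σ.injective h)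
  · obtain ⟨q, hq, h⟩ := rank_surjOn hw ((hσ (σ.symm v)).2 (by simpa using hv))
    exact ⟨q, (hC q).1 hq, by simp [h]⟩
  · simpa using rank_lt_rank ((hC _).2 h) (hrow i c h)
  · simpa using rank_lt_rank ((hC _).2 h) (hcol i c h)

section Construction

variable {lam : ℕ → ℕ} {m p t : ℕ}

/-- Ordinary cells are ordered row by row. The cells `(p - 1, lam p)`, `(p, lam p)` and the rest
of row `p - 1` are moved, in this order, to a virtual row `m + 1` below the diagram, and the last
`t` cells of row `1` to a virtual row `m + 2`. -/
def weight (lam : ℕ → ℕ) (m p t : ℕ) (q : ℕ × ℕ) : ℕ ×ₗ ℕ :=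
  if q = (p - 1, lam p) then toLex (m + 1, 0)
  else if q = (p, lam p) ∨ q.1 = p - 1 ∧ lam p < q.2 then toLex (m + 1, q.2)
  else if q.1 = 1 ∧ lam 1 - t < q.2 then toLex (m + 2, q.2)
  else toLex q

lemma weight_injOn (hzero : ∀ i, m < i → lam i = 0) :
    Set.InjOn (weight lam m p t) (cells m lam) := by
  rintro ⟨i, c⟩ hq ⟨i', c'⟩ hq' h
  simp only [mem_coe, mem_cells hzero, IsCell] at hq hq'
  simp only [weight, Prod.mk.injEq] at h ⊢
  have := hzero i
  have := hzero i'
  split_ifs at h <;> simp only [toLex_inj, Prod.mk.injEq] at h <;> omega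

lemma weight_lt_weight_right (hzero : ∀ i, m < i → lam i = 0) (hp : 3 ≤ p) {i c : ℕ}
    (h : IsCell lam (i, c + 1)) : weight lam m p t (i, c) < weight lam m p t (i, c + 1) := by
  simp only [IsCell] at h
  have := hzero i
  simp only [weight, Prod.mk.injEq]
  split_ifs <;> simp only [Prod.Lex.toLex_lt_toLex] <;> grind

lemma weight_lt_weight_below (hanti : AntitoneOn lam (Set.Ici 1))
    (hzero : ∀ i, m < i → lam i = 0) (hp : 3 ≤ p) (hnext : lam (p + 1) < lam p)
    (htail : lam 2 + t ≤ lam 1) {i c : ℕ} (h : IsCell lam (i + 1, c)) :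
    weight lam m p t (i, c) < weight lam m p t (i + 1, c) := by
  simp only [IsCell] at h
  have := hzero (i + 1)
  have : lam (p - 1) ≤ lam 2 := hanti (by simp) (by simp; omega) (by omega)
  simp only [weight, Prod.mk.injEq]
  split_ifs <;> simp only [Prod.Lex.toLex_lt_toLex] <;> grind

def tailCells (lam : ℕ → ℕ) (p t : ℕ) : Finset (ℕ × ℕ) :=
  {p - 1} ×ˢ Ioc (lam p) (lam (p - 1)) ∪ {1} ×ˢ Ioc (lam 1 - t) (lam 1)

lemma card_tailCells (hp : 3 ≤ p) (ht : t ≤ lam 1) :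
    #(tailCells lam p t) = lam (p - 1) - lam p + t := by
  rw [tailCells, card_union_of_disjoint, card_product, card_product]
  · simp only [card_singleton, Nat.card_Ioc, one_mul]
    omega
  · rw [disjoint_left]
    rintro ⟨i, c⟩ h h'
    simp only [mem_product, mem_singleton] at h h'
    omega

lemma filter_weight_gt_eq_tailCells (hzero : ∀ i, m < i → lam i = 0) (hp : 3 ≤ p) :
    {q ∈ cells m lam | weight lam m p t (p, lam p) < weight lam m p t q} = tailCells lam p t := by
  ext ⟨i, c⟩
  have := hzero i
  simp only [mem_filter, mem_cells hzero, IsCell, tailCells, mem_union, mem_product,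
    mem_singleton, mem_Ioc, weight]
  split_ifs <;> simp only [Prod.Lex.toLex_lt_toLex] <;> grind

lemma filter_weight_gt_eq_insert (hzero : ∀ i, m < i → lam i = 0) (hp : 3 ≤ p)
    (hpos : 0 < lam p) :
    {q ∈ cells m lam | weight lam m p t (p - 1, lam p) < weight lam m p t q} =
      insert (p, lam p) (tailCells lam p t) := by
  ext ⟨i, c⟩
  have := hzero i
  simp only [mem_filter, mem_cells hzero, IsCell, tailCells, mem_insert, mem_union, mem_product,
    mem_singleton, mem_Ioc, weight]
  split_ifs <;> simp only [Prod.Lex.toLex_lt_toLex] <;> grind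

end Construction

theorem exists_isStd_vertical_pair {σ : Equiv.Perm ℕ} {n m p t : ℕ} {lam : ℕ → ℕ}
    (hσ : ∀ v, v ∈ Icc 1 n ↔ σ v ∈ Icc 1 n) (hanti : AntitoneOn lam (Set.Ici 1))
    (hzero : ∀ i, m < i → lam i = 0) (hsum : ∑ i ∈ Icc 1 m, lam i = n) (hp : 3 ≤ p)
    (hpos : 0 < lam p) (hnext : lam (p + 1) < lam p) (htail : lam 2 + t ≤ lam 1) :
    ∃ T, IsStd σ n lam T ∧ T (p - 1, lam p) = σ (n - (lam (p - 1) - lam p) - t - 1) ∧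
      T (p, lam p) = σ (n - (lam (p - 1) - lam p) - t) := by
  have hcard : #(cells m lam) = n := (card_cells m lam).trans hsum
  have hrank := rank_add_card_filter_lt (C := cells m lam) (w := weight lam m p t)
  have htailCard := card_tailCells (lam := lam) (t := t) hp (by omega)
  have hnotMem : (p, lam p) ∉ tailCells lam p t := by
    simp only [tailCells, mem_union, mem_product, mem_singleton, mem_Ioc]
    omega
  refine ⟨σ ∘ rank (cells m lam) (weight lam m p t),
    isStd_comp_rank hσ (fun _ ↦ mem_cells hzero) hcard (weight_injOn hzero)
      (fun _ _ ↦ weight_lt_weight_right hzero hp)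
      (fun _ _ ↦ weight_lt_weight_below hanti hzero hp hnext htail), ?_, ?_⟩
  · have hupper := hrank (p - 1, lam p)
    rw [filter_weight_gt_eq_insert hzero hp hpos, card_insert_of_notMem hnotMem] at hupper
    exact congrArg σ (by omega)
  · have hlower := hrank (p, lam p)
    rw [filter_weight_gt_eq_tailCells hzero hp] at hlower
    exact congrArg σ (by omega)

end StdTableau

theorem exists_std_tableau_same_column_middle_general (n m k l : ℕ) (lam : ℕ → ℕ)
    (hlam_anti : ∀ a b, 1 ≤ a → a ≤ b → lam b ≤ lam a)
    (hlam_sum : ∑ i ∈ Finset.Icc 1 m, lam i = n)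
    (hlam_pos : 0 < lam m)
    (hlam_zero : ∀ i, m < i → lam i = 0)
    (hstrict : ∀ i, 2 ≤ i → i ≤ m → lam i < lam (i - 1))
    (hk : IsLeast {d | ∃ i, 2 ≤ i ∧ i ≤ m ∧ d = lam (i - 1) - lam i} k)
    (hl : l = lam 1 - lam 2)
    (hlk : k < l) :
    ∀ j, n - l < j → j < n - k →
      ∀ σ : Equiv.Perm ℕ, (∀ v, v ∈ Finset.Icc 1 n ↔ σ v ∈ Finset.Icc 1 n) →
        ∃ T, IsStd σ n lam T ∧ ∃ r r' c, IsCell lam (r, c) ∧ IsCell lam (r', c) ∧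
          T (r, c) = σ (j - 1) ∧ T (r', c) = σ j := by
  intro j hj₁ hj₂ σ hσ
  obtain ⟨⟨p, hp₂, hpm, rfl⟩, -⟩ := hk
  have hp₃ : 3 ≤ p := by
    by_contra h
    obtain rfl : p = 2 := by omega
    exact hlk.ne hl.symm
  have hpos : 0 < lam p := hlam_pos.trans_le (hlam_anti p m (by omega) hpm)
  have hgap : lam p ≤ lam (p - 1) := hlam_anti (p - 1) p (by omega) (by omega)
  have hnext : lam (p + 1) < lam p := by
    rcases lt_or_ge p m with h | h
    · simpa using hstrict (p + 1) (by omega) (by omega)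
    · rwa [hlam_zero (p + 1) (by omega)]
  obtain ⟨T, hT, h₁, h₂⟩ := StdTableau.exists_isStd_vertical_pair
    (t := n - j - (lam (p - 1) - lam p)) hσ (fun a ha _ _ hab ↦ hlam_anti a _ ha hab)
    hlam_zero hlam_sum hp₃ hpos hnext (by omega)
  refine ⟨T, hT, p - 1, p, lam p, ⟨by omega, hpos, hgap⟩, ⟨by omega, hpos, le_rfl⟩, ?_, ?_⟩
  · exact h₁.trans (congrArg σ (by omega))
  · exact h₂.trans (congrArg σ (by omega))

/-- for a strictly decreasing partition `λ` with
`k = min(λ_{i-1} - λ_i)` and `l = λ₁ - λ₂ > k`, for every `n - l < j < n - k`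
there is a standard tableau in which `σ(j-1)` and `σ(j)` lie in the same column. -/
theorem exists_std_tableau_same_column_middle (n m k l : ℕ) (lam : ℕ → ℕ)
    (hm : 2 ≤ m)
    (hlam_anti : ∀ a b, 1 ≤ a → a ≤ b → lam b ≤ lam a)
    (hlam_sum : ∑ i ∈ Finset.Icc 1 m, lam i = n)
    (hlam_pos : 0 < lam m)
    (hlam_zero : ∀ i, m < i → lam i = 0)
    (hstrict : ∀ i, 2 ≤ i → i ≤ m → lam i < lam (i - 1))
    (hk : IsLeast {d | ∃ i, 2 ≤ i ∧ i ≤ m ∧ d = lam (i - 1) - lam i} k)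
    (hl : l = lam 1 - lam 2)
    (hlk : k < l) :
    ∀ j, n - l < j → j < n - k →
      ∀ σ : Equiv.Perm ℕ, (∀ v, v ∈ Finset.Icc 1 n ↔ σ v ∈ Finset.Icc 1 n) →
        ∃ T, IsStd σ n lam T ∧ ∃ r r' c, IsCell lam (r, c) ∧ IsCell lam (r', c) ∧
          T (r, c) = σ (j - 1) ∧ T (r', c) = σ j :=
  exists_std_tableau_same_column_middle_general n m k l lam hlam_anti hlam_sum hlam_pos hlam_zero
    hstrict hk hl hlk
end

section
/- Let λ = (λ₁,…,λ_m) ⊢ n with λ_m > 0 and k = min{λ_{i-1} − λ_i : 2 ≤ i ≤ m} > 0. Let p satisfy k = λ_{p-1} − λ_p. Then for every σ ∈ S_n there exists a standard tableau T of shape λ (w.r.t. the order σ(1) ≺ ⋯ ≺ σ(n)) in which σ(n−k−1) and σ(n−k) lie in the same column; specifically σ(n−k) is at position (p, λ_p), σ(n−k−1) at (p−1, λ_p), and σ(n−k+1),…,σ(n) fill positions (p−1, λ_p+1),…,(p−1, λ_{p-1}). -/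
theorem IsStd.perm_comp {σ : Equiv.Perm ℕ} {n : ℕ} {lam : ℕ → ℕ} {r : ℕ × ℕ → ℕ}
    (hr : IsStd (Equiv.refl ℕ) n lam r)
    (hσ : ∀ v, v ∈ Finset.Icc 1 n ↔ σ v ∈ Finset.Icc 1 n) :
    IsStd σ n lam (σ ∘ r) := by
  obtain ⟨⟨hmem, hinj, hsurj⟩, hrow, hcol⟩ := hr
  refine ⟨⟨fun q hq => (hσ _).1 (hmem q hq),
    fun q q' hq hq' h => hinj q q' hq hq' (σ.injective h), fun v hv => ?_⟩,
    fun i j hj hc => by simpa using hrow i j hj hc, fun i j hi hc => by simpa using hcol i j hi hc⟩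
  obtain ⟨q, hq, hqv⟩ := hsurj (σ.symm v) ((hσ _).2 (by simpa using hv))
  exact ⟨q, hq, by simp [hqv]⟩

theorem isFilling_of_injOn {n : ℕ} {lam : ℕ → ℕ} {T : ℕ × ℕ → ℕ} (cells : Finset (ℕ × ℕ))
    (hcells : ∀ q, q ∈ cells ↔ IsCell lam q) (hcard : cells.card = n)
    (hmem : ∀ q, IsCell lam q → T q ∈ Finset.Icc 1 n)
    (hinj : ∀ q q', IsCell lam q → IsCell lam q' → T q = T q' → q = q') :
    IsFilling n lam T := by
  refine ⟨hmem, hinj, fun v hv => ?_⟩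
  obtain ⟨q, hq, rfl⟩ := Finset.surjOn_of_injOn_of_card_le T
    (fun q hq => hmem q ((hcells q).1 hq))
    (fun q hq q' hq' h => hinj q q' ((hcells q).1 hq) ((hcells q').1 hq') h)
    (by simp [hcard]) hv
  exact ⟨q, (hcells q).1 hq, rfl⟩

def youngCells (lam : ℕ → ℕ) (m : ℕ) : Finset (ℕ × ℕ) :=
  (Finset.Icc 1 m).biUnion fun i => {i} ×ˢ Finset.Icc 1 (lam i)

theorem mem_youngCells {lam : ℕ → ℕ} {m : ℕ} (hlam_zero : ∀ i, m < i → lam i = 0)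
    (q : ℕ × ℕ) : q ∈ youngCells lam m ↔ IsCell lam q := by
  obtain ⟨i, j⟩ := q
  simp only [youngCells, IsCell, Finset.mem_biUnion, Finset.mem_Icc, Finset.mem_product,
    Finset.mem_singleton]
  constructor
  · rintro ⟨i, ⟨hi, -⟩, rfl, hj⟩
    exact ⟨hi, hj⟩
  · rintro ⟨hi, hj, hjl⟩
    have him : i ≤ m := by
      by_contra h
      have := hlam_zero i (by omega)
      omega
    exact ⟨i, ⟨hi, him⟩, rfl, hj, hjl⟩

theorem card_youngCells (lam : ℕ → ℕ) (m : ℕ) :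
    (youngCells lam m).card = ∑ i ∈ Finset.Icc 1 m, lam i := by
  rw [youngCells, Finset.card_biUnion]
  · simp
  · intro i _ i' _ hii'
    simp only [Function.onFun, Finset.disjoint_left, Finset.mem_product, Finset.mem_singleton]
    rintro ⟨a, b⟩ ⟨rfl, -⟩ ⟨rfl, -⟩
    exact hii' rfl

-- Reading `μ` row by row puts `rowStart μ i + j` into box `(i, j)`.
def rowStart (μ : ℕ → ℕ) (i : ℕ) : ℕ :=
  ∑ t ∈ Finset.Ico 1 i, μ t

theorem rowStart_succ (μ : ℕ → ℕ) {i : ℕ} (hi : 1 ≤ i) :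
    rowStart μ (i + 1) = rowStart μ i + μ i :=
  Finset.sum_Ico_succ_top hi μ

theorem rowStart_mono (μ : ℕ → ℕ) : Monotone (rowStart μ) := fun _ _ hab =>
  Finset.sum_le_sum_of_subset (Finset.Ico_subset_Ico le_rfl hab)

theorem rowStart_add_le_of_lt {μ : ℕ → ℕ} {i i' j : ℕ} (hi : 1 ≤ i) (hj : j ≤ μ i)
    (hii' : i < i') : rowStart μ i + j ≤ rowStart μ i' := by
  have := rowStart_mono μ hii'
  rw [rowStart_succ μ hi] at this
  omega

theorem rowStart_add_le_of_isCell {μ : ℕ → ℕ} {m i j : ℕ} (hzero : ∀ i, m < i → μ i = 0)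
    (hc : IsCell μ (i, j)) : rowStart μ i + j ≤ rowStart μ (m + 1) := by
  obtain ⟨hi : 1 ≤ i, hj : 1 ≤ j, hjμ : j ≤ μ i⟩ := hc
  refine rowStart_add_le_of_lt hi hjμ (Nat.lt_succ_of_le ?_)
  by_contra h
  have := hzero i (by omega)
  omega

theorem rowStart_add_inj {μ : ℕ → ℕ} {i j i' j' : ℕ} (hc : IsCell μ (i, j))
    (hc' : IsCell μ (i', j')) (h : rowStart μ i + j = rowStart μ i' + j') : i = i' ∧ j = j' := by
  obtain ⟨hi : 1 ≤ i, hj, hjμ : j ≤ μ i⟩ := hc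
  obtain ⟨hi' : 1 ≤ i', hj', hjμ' : j' ≤ μ i'⟩ := hc'
  rcases lt_trichotomy i i' with hlt | rfl | hlt
  · have := rowStart_add_le_of_lt hi hjμ hlt
    omega
  · omega
  · have := rowStart_add_le_of_lt hi' hjμ' hlt
    omega

def truncCorner (lam : ℕ → ℕ) (p : ℕ) : ℕ → ℕ :=
  fun i => if i = p - 1 ∨ i = p then lam p - 1 else lam i

theorem isCell_truncCorner {lam : ℕ → ℕ} {p i j : ℕ} (hc : IsCell lam (i, j))
    (ha : ¬(i = p ∧ j = lam p)) (hb : ¬(i = p - 1 ∧ lam p ≤ j)) :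
    IsCell (truncCorner lam p) (i, j) := by
  obtain ⟨hi, hj, hjl⟩ := hc
  refine ⟨hi, hj, ?_⟩
  simp only [truncCorner] at hjl ⊢
  split_ifs with h
  · rcases h with rfl | rfl <;> omega
  · exact hjl

theorem sum_eq_rowStart_truncCorner_add {lam : ℕ → ℕ} {m p : ℕ} (hp : 2 ≤ p) (hpm : p ≤ m)
    (hlp : 1 ≤ lam p) (hle : lam p ≤ lam (p - 1)) :
    ∑ i ∈ Finset.Icc 1 m, lam i =
      rowStart (truncCorner lam p) (m + 1) + (lam (p - 1) - lam p) + 2 := by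
  have hsplit : ∀ i, lam i = truncCorner lam p i + (lam i - truncCorner lam p i) := by
    intro i
    simp only [truncCorner]
    split_ifs with h
    · rcases h with rfl | rfl <;> omega
    · omega
  have hdiff : ∑ i ∈ Finset.Icc 1 m, (lam i - truncCorner lam p i) =
      (lam (p - 1) - lam p) + 2 := by
    rw [Finset.sum_eq_add_of_mem (p - 1) p (by simp; omega) (by simp; omega) (by omega)]
    · simp [truncCorner]
      omega
    · intro i _ hi
      simp [truncCorner, hi]
  rw [rowStart, Finset.Ico_add_one_right_eq_Icc, Finset.sum_congr rfl fun i _ => hsplit i,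
    Finset.sum_add_distrib, hdiff]
  omega

def cornerRank (lam : ℕ → ℕ) (m p i j : ℕ) : ℕ :=
  let N := rowStart (truncCorner lam p) (m + 1)
  if i = p ∧ j = lam p then N + 2
  else if i = p - 1 ∧ j = lam p then N + 1
  else if i = p - 1 ∧ lam p < j then N + 2 + (j - lam p)
  else rowStart (truncCorner lam p) i + j

section CornerRank

variable {lam : ℕ → ℕ} {m p : ℕ}

theorem cornerRank_cases {i j : ℕ} (hpm : p ≤ m)
    (hzero : ∀ i, m < i → lam i = 0) (hc : IsCell lam (i, j)) :
    (i = p ∧ j = lam p ∧ cornerRank lam m p i j = rowStart (truncCorner lam p) (m + 1) + 2) ∨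
    (i = p - 1 ∧ j = lam p ∧
      cornerRank lam m p i j = rowStart (truncCorner lam p) (m + 1) + 1) ∨
    (i = p - 1 ∧ lam p < j ∧
      cornerRank lam m p i j = rowStart (truncCorner lam p) (m + 1) + 2 + (j - lam p)) ∨
    (¬(i = p ∧ j = lam p) ∧ ¬(i = p - 1 ∧ lam p ≤ j) ∧ IsCell (truncCorner lam p) (i, j) ∧
      cornerRank lam m p i j = rowStart (truncCorner lam p) i + j ∧
      rowStart (truncCorner lam p) i + j ≤ rowStart (truncCorner lam p) (m + 1)) := by
  simp only [cornerRank]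
  split_ifs with ha hb hc'
  · exact Or.inl ⟨ha.1, ha.2, rfl⟩
  · exact Or.inr (Or.inl ⟨hb.1, hb.2, rfl⟩)
  · exact Or.inr (Or.inr (Or.inl ⟨hc'.1, hc'.2, rfl⟩))
  · have hgen : ¬(i = p - 1 ∧ lam p ≤ j) := by omega
    have htc := isCell_truncCorner hc ha hgen
    refine Or.inr (Or.inr (Or.inr ⟨ha, hgen, htc, rfl, rowStart_add_le_of_isCell ?_ htc⟩))
    intro i hi
    simp only [truncCorner]
    rw [if_neg (by omega), hzero i hi]

theorem cornerRank_corner :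
    cornerRank lam m p p (lam p) = rowStart (truncCorner lam p) (m + 1) + 2 :=
  if_pos ⟨rfl, rfl⟩

theorem cornerRank_above_corner (hp : 1 ≤ p) :
    cornerRank lam m p (p - 1) (lam p) = rowStart (truncCorner lam p) (m + 1) + 1 := by
  rw [cornerRank, if_neg (by omega), if_pos ⟨rfl, rfl⟩]

theorem cornerRank_right_of_corner {c : ℕ} (hc : lam p < c) :
    cornerRank lam m p (p - 1) c = rowStart (truncCorner lam p) (m + 1) + 2 + (c - lam p) := by
  rw [cornerRank, if_neg (by omega), if_neg (by omega), if_pos ⟨rfl, hc⟩]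

theorem cornerRank_mem_Icc {i j : ℕ} (hpm : p ≤ m) (hzero : ∀ i, m < i → lam i = 0)
    (hc : IsCell lam (i, j)) : cornerRank lam m p i j ∈
      Finset.Icc 1 (rowStart (truncCorner lam p) (m + 1) + (lam (p - 1) - lam p) + 2) := by
  have hj : 1 ≤ j := hc.2.1
  have hjl : j ≤ lam i := hc.2.2
  rw [Finset.mem_Icc]
  rcases cornerRank_cases hpm hzero hc with ⟨-, -, h⟩ | ⟨-, -, h⟩ | ⟨rfl, -, h⟩ |
    ⟨-, -, -, h, hle⟩ <;> omega

theorem cornerRank_injOn {i j i' j' : ℕ} (hpm : p ≤ m) (hzero : ∀ i, m < i → lam i = 0)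
    (hc : IsCell lam (i, j)) (hc' : IsCell lam (i', j'))
    (h : cornerRank lam m p i j = cornerRank lam m p i' j') : (i, j) = (i', j') := by
  rw [Prod.mk.injEq]
  rcases cornerRank_cases hpm hzero hc with ⟨a1, a2, e⟩ | ⟨a1, a2, e⟩ | ⟨a1, a2, e⟩ |
      ⟨-, -, htc, e, hle⟩ <;>
    rcases cornerRank_cases hpm hzero hc' with ⟨b1, b2, e'⟩ | ⟨b1, b2, e'⟩ | ⟨b1, b2, e'⟩ |
      ⟨-, -, htc', e', hle'⟩
  all_goals first
    | omega
    | exact rowStart_add_inj htc htc' (by omega)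

theorem cornerRank_lt_right {i j : ℕ} (hpm : p ≤ m) (hzero : ∀ i, m < i → lam i = 0)
    (hj : 1 ≤ j) (hc : IsCell lam (i, j + 1)) :
    cornerRank lam m p i j < cornerRank lam m p i (j + 1) := by
  have hjl : j + 1 ≤ lam i := hc.2.2
  have hc₀ : IsCell lam (i, j) := ⟨hc.1, hj, (by omega : j ≤ lam i)⟩
  rcases cornerRank_cases hpm hzero hc₀ with ⟨rfl, rfl, -⟩ | ⟨a1, a2, e⟩ | ⟨a1, a2, e⟩ |
      ⟨a1, a2, -, e, hle⟩
  · omega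
  all_goals rcases cornerRank_cases hpm hzero hc with ⟨b1, b2, e'⟩ | ⟨b1, b2, e'⟩ | ⟨b1, b2, e'⟩ |
      ⟨b1, b2, -, e', hle'⟩ <;>
    omega

theorem cornerRank_lt_down {i j : ℕ} (hpm : p ≤ m) (hzero : ∀ i, m < i → lam i = 0)
    (hanti : lam (i + 1) ≤ lam i) (hnext : lam (p + 1) < lam p) (hi : 1 ≤ i)
    (hc : IsCell lam (i + 1, j)) :
    cornerRank lam m p i j < cornerRank lam m p (i + 1) j := by
  have hj : 1 ≤ j := hc.2.1
  have hjl : j ≤ lam (i + 1) := hc.2.2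
  have hc₀ : IsCell lam (i, j) := ⟨hi, hj, (by omega : j ≤ lam i)⟩
  rcases cornerRank_cases hpm hzero hc₀ with ⟨rfl, rfl, -⟩ | hb | ⟨rfl, hlt, -⟩ |
      ⟨a1, a2, ⟨-, -, htc : j ≤ truncCorner lam p i⟩, e, hle⟩
  · omega
  · rcases cornerRank_cases hpm hzero hc with ⟨b1, b2, e'⟩ | ⟨b1, b2, e'⟩ | ⟨b1, b2, e'⟩ |
      ⟨b1, b2, -, e', hle'⟩ <;> omega
  · rw [Nat.sub_add_cancel (by omega)] at hjl
    omega
  · have hstep := rowStart_succ (truncCorner lam p) hi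
    rcases cornerRank_cases hpm hzero hc with ⟨b1, b2, e'⟩ | ⟨b1, b2, e'⟩ | ⟨b1, b2, e'⟩ |
      ⟨b1, b2, -, e', hle'⟩ <;> omega

end CornerRank

theorem isStd_cornerRank {lam : ℕ → ℕ} {m p : ℕ} (hp : 2 ≤ p) (hpm : p ≤ m)
    (hanti : ∀ a b, 1 ≤ a → a ≤ b → lam b ≤ lam a) (hzero : ∀ i, m < i → lam i = 0)
    (hnext : lam (p + 1) < lam p) :
    IsStd (Equiv.refl ℕ) (∑ i ∈ Finset.Icc 1 m, lam i) lam
      (fun q => cornerRank lam m p q.1 q.2) := by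
  have hsum := sum_eq_rowStart_truncCorner_add hp hpm (by omega)
    (hanti (p - 1) p (by omega) (by omega))
  refine ⟨isFilling_of_injOn (youngCells lam m) (mem_youngCells hzero) (card_youngCells lam m)
      (fun q hq => ?_) (fun q q' hq hq' h => cornerRank_injOn hpm hzero hq hq' h),
    fun i j hj hc => cornerRank_lt_right hpm hzero hj hc,
    fun i j hi hc => cornerRank_lt_down hpm hzero (hanti i (i + 1) hi (by omega)) hnext hi hc⟩
  rw [hsum]
  exact cornerRank_mem_Icc hpm hzero hq

theorem exists_std_tableau_corner_general (n m k p : ℕ) (lam : ℕ → ℕ)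
    (hlam_anti : ∀ a b, 1 ≤ a → a ≤ b → lam b ≤ lam a)
    (hlam_sum : ∑ i ∈ Finset.Icc 1 m, lam i = n)
    (hlam_pos : 0 < lam m)
    (hlam_zero : ∀ i, m < i → lam i = 0)
    (hk : IsLeast {d | ∃ i, 2 ≤ i ∧ i ≤ m ∧ d = lam (i - 1) - lam i} k)
    (hkpos : 0 < k)
    (hp : 2 ≤ p) (hpm : p ≤ m) (hpk : lam (p - 1) - lam p = k) :
    ∀ σ : Equiv.Perm ℕ, (∀ v, v ∈ Finset.Icc 1 n ↔ σ v ∈ Finset.Icc 1 n) →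
      ∃ T, IsStd σ n lam T ∧
        T (p, lam p) = σ (n - k) ∧
        T (p - 1, lam p) = σ (n - k - 1) ∧
        ∀ c, lam p < c → c ≤ lam (p - 1) →
          ∃ i, n - k + 1 ≤ i ∧ i ≤ n ∧ T (p - 1, c) = σ i := by
  intro σ hσ
  have hnext : lam (p + 1) < lam p := by
    rcases Nat.lt_or_ge m (p + 1) with h | h
    · rw [hlam_zero _ h]
      exact hlam_pos.trans_le (hlam_anti p m (by omega) hpm)
    · have hmin := hk.2 ⟨p + 1, by omega, h, rfl⟩
      have hle := hlam_anti p (p + 1) (by omega) (by omega)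
      simp only [Nat.add_sub_cancel] at hmin
      omega
  have hsum := sum_eq_rowStart_truncCorner_add hp hpm (by omega)
    (hlam_anti (p - 1) p (by omega) (by omega))
  subst hlam_sum
  refine ⟨σ ∘ fun q => cornerRank lam m p q.1 q.2,
    (isStd_cornerRank hp hpm hlam_anti hlam_zero hnext).perm_comp hσ,
    congrArg σ (cornerRank_corner.trans (by omega)),
    congrArg σ ((cornerRank_above_corner (by omega)).trans (by omega)),
    fun c hc₁ hc₂ => ⟨_, ?_, ?_, congrArg σ (cornerRank_right_of_corner hc₁)⟩⟩ <;>
  omega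

/-- if `k = min(λ_{i-1} - λ_i) > 0` and `k = λ_{p-1} - λ_p`, then for
every `σ` there is a standard tableau with `σ(n-k)` at `(p, λ_p)`, `σ(n-k-1)` at
`(p-1, λ_p)`, and `σ(n-k+1), …, σ(n)` filling `(p-1, λ_p+1), …, (p-1, λ_{p-1})`. -/
theorem exists_std_tableau_corner (n m k p : ℕ) (lam : ℕ → ℕ)
    (hm : 2 ≤ m)
    (hlam_anti : ∀ a b, 1 ≤ a → a ≤ b → lam b ≤ lam a)
    (hlam_sum : ∑ i ∈ Finset.Icc 1 m, lam i = n)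
    (hlam_pos : 0 < lam m)
    (hlam_zero : ∀ i, m < i → lam i = 0)
    (hk : IsLeast {d | ∃ i, 2 ≤ i ∧ i ≤ m ∧ d = lam (i - 1) - lam i} k)
    (hkpos : 0 < k)
    (hp : 2 ≤ p) (hpm : p ≤ m) (hpk : lam (p - 1) - lam p = k) :
    ∀ σ : Equiv.Perm ℕ, (∀ v, v ∈ Finset.Icc 1 n ↔ σ v ∈ Finset.Icc 1 n) →
      ∃ T, IsStd σ n lam T ∧
        T (p, lam p) = σ (n - k) ∧
        T (p - 1, lam p) = σ (n - k - 1) ∧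
        ∀ c, lam p < c → c ≤ lam (p - 1) →
          ∃ i, n - k + 1 ≤ i ∧ i ≤ n ∧ T (p - 1, c) = σ i :=
  exists_std_tableau_corner_general n m k p lam hlam_anti hlam_sum hlam_pos hlam_zero hk hkpos hp
    hpm hpk
end
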